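/- Let g be a CTI sharing game with finite lower value bound v̲, let ĝ be its reference static game, and let P be the asynchronous learning rule built from best response dynamics for every agent; let π be an initial distribution with full support on A. If every agent has at least one neighbor and v̲ > c_i/|N_i| for every agent i, then: (1) the all-ones profile 1⃗ is a strict Nash equilibrium of ĝ; (2) Pr(s(t;P_π) = 1⃗) ≥ Pr(s(t;P̂_π) = 1⃗) for every t ≥ 1; and (3) Pr(s(t;P_π) = 1⃗) > 0 for every t ≥ 1. -/

import Mathlib

/-!
The probability of being at `1⃗` at time `T` is the `π`-average over initial profiles of
`reachProb`, the probability of reaching `1⃗` in the remaining steps, which satisfies a backward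
recursion. Under best response dynamics an agent moves to sharing with a probability that is
monotone in its payoff gain from sharing, and alignment makes this gain in the history-dependent
game at a larger profile at least the gain in the reference game at a smaller one. Coupling the two
chains agent by agent therefore keeps the history-dependent chain above the static one, and `1⃗` is
the top profile. Since `1⃗` is a strict equilibrium of every stage game, the constant path at `1⃗`
has probability `π 1⃗ > 0`.
-/

open scoped Classical
open Finset

abbrev Profile (n : ℕ) := Fin n → Bool
abbrev UtilProfile (n : ℕ) := Fin n → Profile n → ℝ
abbrev Rule (n : ℕ) := Profile n → Profile n → UtilProfile n → ℝ

/-- `P` is an individual learning rule for agent `i`: it maps into `[0,1]`, is a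
probability measure over next profiles, and only agent `i` may change its action. -/
def IsIndividual {n : ℕ} (i : Fin n) (P : Rule n) : Prop :=
  (∀ (a : Profile n) (U : UtilProfile n), ∑ b : Profile n, P a b U = 1) ∧
  (∀ (a b : Profile n) (U : UtilProfile n), 0 ≤ P a b U ∧ P a b U ≤ 1) ∧
  (∀ (a b : Profile n) (U : UtilProfile n), (∃ j, j ≠ i ∧ a j ≠ b j) → P a b U = 0)

/-- `P` is local: the transition probability only depends on the selected action of `i`
and the pair of payoffs `(U_i(0,a_{-i}), U_i(1,a_{-i}))`. -/
def IsLocalRule {n : ℕ} (i : Fin n) (P : Rule n) : Prop :=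
  ∃ Pbar : Bool → ℝ × ℝ → ℝ,
    ∀ (a : Profile n) (b : Bool) (U : UtilProfile n),
      P a (Function.update a i b) U
        = Pbar b (U i (Function.update a i false), U i (Function.update a i true))

/-- The utility profile obtained from `U` by adding `l` to agent `i`'s utility on
profiles where `i` plays `b`. -/
def bump {n : ℕ} (i : Fin n) (U : UtilProfile n) (b : Bool) (l : ℝ) : UtilProfile n :=
  Function.update U i (fun x => if x i = b then U i x + l else U i x)

/-- `P` is monotone with respect to utility. -/
def IsMonotoneRule {n : ℕ} (i : Fin n) (P : Rule n) : Prop :=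
  ∀ (U : UtilProfile n) (b : Bool) (l : ℝ), 0 ≤ l → ∀ a : Profile n,
    P a (Function.update a i b) U ≤ P a (Function.update a i b) (bump i U b l)

/-- The asynchronous learning rule built from individual learning rules. -/
noncomputable def asyncRule {n : ℕ} (Pvec : Fin n → Rule n) : Rule n :=
  fun a b U => (1 / (n : ℝ)) * ∑ i : Fin n, Pvec i a b U

/-- The best-response set of agent `i` to `a_{-i}` given utilities `U`. -/
noncomputable def BRset {n : ℕ} (i : Fin n) (U : UtilProfile n) (a : Profile n) : Finset Bool :=
  Finset.univ.filter fun b => ∀ b' : Bool,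
    U i (Function.update a i b') ≤ U i (Function.update a i b)

/-- Best response dynamics for agent `i` (ties broken uniformly at random). -/
noncomputable def bestResponse {n : ℕ} (i : Fin n) : Rule n :=
  fun a b U =>
    if ∀ j, j ≠ i → a j = b j then
      (if b i ∈ BRset i U a then (1 : ℝ) else 0) / (BRset i U a).card
    else 0

/-- A finite (nonempty) history of action profiles; `⟨T, α⟩` has length `T+1`. -/
abbrev Hist (n : ℕ) := Σ T : ℕ, (Fin (T + 1) → Profile n)

/-- The last action profile of a history. -/
def lastProf {n : ℕ} (h : Hist n) : Profile n := h.2 (Fin.last h.1)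

/-- `Uh` is an aligned history-dependent game with reference static game `Uhat`. -/
def Aligned {n : ℕ} (Uh : Hist n → UtilProfile n) (Uhat : UtilProfile n) : Prop :=
  ∀ (h : Hist n) (a : Profile n) (i : Fin n),
    (∀ j, j ≠ i → a j ≤ lastProf h j) →
    Uhat i (Function.update a i true) ≤ Uh h i (Function.update (lastProf h) i true) ∧
    Uh h i (Function.update (lastProf h) i false) ≤ Uhat i (Function.update a i false)

/-- The prefix `α^{≤t}` of a path `α` (a history of length `t+1`). -/
def prefixHist {n T : ℕ} (α : Fin (T + 1) → Profile n) (t : Fin T) : Hist n :=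
  ⟨t.1, fun s => α (Fin.castLE (Nat.succ_le_succ t.isLt.le) s)⟩

/-- The path measure of the history-dependent game:
`P_π(α) = π(α¹) ∏_t P^{α^{≤t}}(α^{t+1})`. -/
noncomputable def pathHist {n : ℕ} (P : Rule n) (Uh : Hist n → UtilProfile n)
    (π : Profile n → ℝ) (T : ℕ) (α : Fin (T + 1) → Profile n) : ℝ :=
  π (α 0) * ∏ t : Fin T, P (α t.castSucc) (α t.succ) (Uh (prefixHist α t))

/-- The path measure of the static game:
`P̂_π(α) = π(α¹) ∏_t P̂^{α^t}(α^{t+1})`. -/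
noncomputable def pathStatic {n : ℕ} (P : Rule n) (Uhat : UtilProfile n)
    (π : Profile n → ℝ) (T : ℕ) (α : Fin (T + 1) → Profile n) : ℝ :=
  π (α 0) * ∏ t : Fin T, P (α t.castSucc) (α t.succ) Uhat

/-- `π` is a probability distribution on the set of action profiles. -/
def IsProb {n : ℕ} (π : Profile n → ℝ) : Prop :=
  (∀ a, 0 ≤ π a) ∧ ∑ a : Profile n, π a = 1

/-- The probability that the process governed by the path measure `μ` is at profile `a`
at the final time of paths of length `T+1`. -/
noncomputable def prAt {n : ℕ} (T : ℕ) (μ : (Fin (T + 1) → Profile n) → ℝ)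
    (a : Profile n) : ℝ :=
  ∑ α ∈ Finset.univ.filter (fun α : Fin (T + 1) → Profile n => α (Fin.last T) = a), μ α

/-- `a` is a strict Nash equilibrium of the static game with utilities `U`. -/
def IsStrictNash {n : ℕ} (U : UtilProfile n) (a : Profile n) : Prop :=
  ∀ (i : Fin n) (b : Bool), b ≠ a i → U i (Function.update a i b) < U i a

/-- The CTI sharing utility with cost vector `c` and CTI values `w`:
`U_i(a) = a_i(-c_i + ∑_{j ∈ N_i} a_j w_j)`. -/
noncomputable def ctiUtil {n : ℕ} (G : SimpleGraph (Fin n)) [DecidableRel G.Adj]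
    (c : Fin n → ℝ) (w : Fin n → ℝ) : UtilProfile n :=
  fun i a => (if a i then (1 : ℝ) else 0) *
    (-(c i) + ∑ j ∈ G.neighborFinset i, (if a j then w j else 0))

section PathMeasure

variable {n : ℕ}

noncomputable def reachProb (P : Rule n) (Uh : Hist n → UtilProfile n) (target : Profile n) :
    ℕ → Hist n → ℝ
  | 0, h => if lastProf h = target then 1 else 0
  | r + 1, h => ∑ b, P (lastProf h) b (Uh h) * reachProb P Uh target r ⟨h.1 + 1, Fin.snoc h.2 b⟩

lemma lastProf_snoc (h : Hist n) (b : Profile n) : lastProf ⟨h.1 + 1, Fin.snoc h.2 b⟩ = b :=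
  Fin.snoc_last (α := fun _ => Profile n) ..

lemma prefixHist_snoc_castSucc {T : ℕ} (α : Fin (T + 1) → Profile n) (b : Profile n)
    (t : Fin T) : prefixHist (Fin.snoc α b : Fin (T + 2) → Profile n) t.castSucc = prefixHist α t :=
  Sigma.ext rfl <| heq_of_eq <| funext fun s =>
    Fin.snoc_castSucc (α := fun _ => Profile n) (p := α) (x := b) (i := Fin.castLE _ s)

lemma prefixHist_snoc_last {T : ℕ} (α : Fin (T + 1) → Profile n) (b : Profile n) :
    prefixHist (Fin.snoc α b : Fin (T + 2) → Profile n) (Fin.last T) = ⟨T, α⟩ :=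
  Sigma.ext rfl <| heq_of_eq <| funext fun s =>
    Fin.snoc_castSucc (α := fun _ => Profile n) (p := α) (x := b) (i := s)

lemma pathHist_snoc (P : Rule n) (Uh : Hist n → UtilProfile n) (π : Profile n → ℝ) {T : ℕ}
    (α : Fin (T + 1) → Profile n) (b : Profile n) :
    pathHist P Uh π (T + 1) (Fin.snoc α b) =
      pathHist P Uh π T α * P (α (Fin.last T)) b (Uh ⟨T, α⟩) := by
  simp only [pathHist, Fin.prod_univ_castSucc, Fin.snoc_castSucc,
    ← Fin.castSucc_zero, prefixHist_snoc_castSucc, Fin.succ_last, Fin.snoc_last,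
    prefixHist_snoc_last, mul_assoc, Fin.succ_castSucc]

theorem sum_pathHist_mul_reachProb (P : Rule n) (Uh : Hist n → UtilProfile n)
    (π : Profile n → ℝ) (target : Profile n) :
    ∀ r T, ∑ α : Fin (T + 1) → Profile n, pathHist P Uh π T α * reachProb P Uh target r ⟨T, α⟩ =
      prAt (r + T) (pathHist P Uh π (r + T)) target
  | 0, T => by
    rw [zero_add]
    simp only [reachProb, prAt, sum_filter, mul_boole]
    rfl
  | r + 1, T => by
    rw [show r + 1 + T = r + (T + 1) by omega, ← sum_pathHist_mul_reachProb P Uh π target r (T + 1)]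
    calc _ = ∑ α : Fin (T + 1) → Profile n, ∑ b, pathHist P Uh π (T + 1) (Fin.snoc α b) *
            reachProb P Uh target r ⟨T + 1, Fin.snoc α b⟩ := by
          simp only [reachProb, mul_sum, pathHist_snoc, mul_assoc]
          rfl
      _ = _ := by
        rw [← Fintype.sum_prod_type_right']
        exact Fintype.sum_equiv (Fin.snocEquiv fun _ => Profile n) _ _ fun _ => rfl

theorem reachProb_top_le_reachProb_top (P : Rule n) (Uh' Uh : Hist n → UtilProfile n)
    -- one-step stochastic domination, tested against the continuation values of two processes
    (hstep : ∀ h' h, lastProf h' ≤ lastProf h → ∀ f g : Profile n → ℝ,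
      (∀ x y, x ≤ y → f x ≤ g y) →
        ∑ x, P (lastProf h') x (Uh' h') * f x ≤ ∑ y, P (lastProf h) y (Uh h) * g y) :
    ∀ r h' h, lastProf h' ≤ lastProf h → reachProb P Uh' ⊤ r h' ≤ reachProb P Uh ⊤ r h
  | 0, h', h, hle => by
    by_cases htop : lastProf h' = ⊤
    · simp [reachProb, htop, top_le_iff.mp (htop ▸ hle)]
    · simp only [reachProb, if_neg htop]
      split_ifs <;> norm_num
  | r + 1, h', h, hle => hstep h' h hle _ _ fun x y hxy =>
      reachProb_top_le_reachProb_top P Uh' Uh hstep r _ _ (by rwa [lastProf_snoc, lastProf_snoc])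

end PathMeasure

section BestResponse

variable {n : ℕ}

def payoffGain (U : UtilProfile n) (i : Fin n) (a : Profile n) : ℝ :=
  U i (Function.update a i true) - U i (Function.update a i false)

noncomputable def brProbTrue (d : ℝ) : ℝ := if 0 < d then 1 else if d < 0 then 0 else 1 / 2

lemma brProbTrue_nonneg (d : ℝ) : 0 ≤ brProbTrue d := by
  unfold brProbTrue; split_ifs <;> norm_num

lemma brProbTrue_le_one (d : ℝ) : brProbTrue d ≤ 1 := by
  unfold brProbTrue; split_ifs <;> norm_num

lemma brProbTrue_mono : Monotone brProbTrue := by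
  intro d d' h
  unfold brProbTrue
  split_ifs <;> (try norm_num) <;> linarith

lemma BRset_eq (i : Fin n) (U : UtilProfile n) (a : Profile n) :
    BRset i U a =
      if 0 < payoffGain U i a then {true} else if payoffGain U i a < 0 then {false} else univ := by
  unfold payoffGain
  ext b
  cases b <;> simp only [BRset, Bool.forall_bool, mem_filter, mem_univ, true_and] <;>
    split_ifs <;> simp <;> linarith

lemma bestResponse_update (i : Fin n) (a : Profile n) (b : Bool) (U : UtilProfile n) :
    bestResponse i a (Function.update a i b) U =
      (if b ∈ BRset i U a then 1 else 0) / (BRset i U a).card := by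
  rw [bestResponse, if_pos fun j hj => (Function.update_of_ne hj b a).symm, Function.update_self]

lemma bestResponse_update_true (i : Fin n) (a : Profile n) (U : UtilProfile n) :
    bestResponse i a (Function.update a i true) U = brProbTrue (payoffGain U i a) := by
  rw [bestResponse_update, BRset_eq, brProbTrue]
  by_cases hpos : 0 < payoffGain U i a
  · simp [hpos]
  by_cases hneg : payoffGain U i a < 0
  · simp [hpos, hneg]
  · norm_num [hpos, hneg]

lemma bestResponse_update_false (i : Fin n) (a : Profile n) (U : UtilProfile n) :
    bestResponse i a (Function.update a i false) U = 1 - brProbTrue (payoffGain U i a) := by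
  rw [bestResponse_update, BRset_eq, brProbTrue]
  by_cases hpos : 0 < payoffGain U i a
  · simp [hpos]
  by_cases hneg : payoffGain U i a < 0
  · simp [hpos, hneg]
  · norm_num [hpos, hneg]

lemma bestResponse_nonneg (i : Fin n) (a b : Profile n) (U : UtilProfile n) :
    0 ≤ bestResponse i a b U := by
  unfold bestResponse
  split_ifs <;> positivity

lemma bestResponse_eq_zero_of_ne (i : Fin n) {a b : Profile n} (U : UtilProfile n)
    (htrue : b ≠ Function.update a i true) (hfalse : b ≠ Function.update a i false) :
    bestResponse i a b U = 0 := by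
  refine if_neg fun hb => ?_
  have hupd : b = Function.update a i (b i) :=
    Function.eq_update_iff.2 ⟨rfl, fun j hj => (hb j hj).symm⟩
  cases hbi : b i <;> rw [hbi] at hupd
  exacts [hfalse hupd, htrue hupd]

lemma sum_bestResponse_mul (i : Fin n) (a : Profile n) (U : UtilProfile n) (f : Profile n → ℝ) :
    ∑ x, bestResponse i a x U * f x =
      brProbTrue (payoffGain U i a) * f (Function.update a i true) +
        (1 - brProbTrue (payoffGain U i a)) * f (Function.update a i false) := by
  rw [Fintype.sum_eq_add (Function.update a i true) (Function.update a i false)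
      (by simp [Function.update_eq_iff]) fun x hx => by
        rw [bestResponse_eq_zero_of_ne i U hx.1 hx.2, zero_mul],
    bestResponse_update_true, bestResponse_update_false]

lemma BRset_eq_singleton_of_isStrictNash {U : UtilProfile n} {a : Profile n}
    (hU : IsStrictNash U a) (i : Fin n) : BRset i U a = {a i} := by
  ext b
  simp only [BRset, mem_filter, mem_univ, true_and, mem_singleton]
  constructor
  · intro hb
    by_contra hne
    have := hb (a i)
    rw [Function.update_eq_self] at this
    exact (hU i b hne).not_ge this
  · rintro rfl b'
    rw [Function.update_eq_self]
    by_cases hb' : b' = a i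
    · rw [hb', Function.update_eq_self]
    · exact (hU i b' hb').le

lemma bestResponse_self_of_isStrictNash {U : UtilProfile n} {a : Profile n}
    (hU : IsStrictNash U a) (i : Fin n) : bestResponse i a a U = 1 := by
  simp [bestResponse, BRset_eq_singleton_of_isStrictNash hU]

end BestResponse

section Asynchronous

variable {n : ℕ}

lemma sum_asyncRule_mul (Pv : Fin n → Rule n) (a : Profile n) (U : UtilProfile n)
    (f : Profile n → ℝ) :
    ∑ x, asyncRule Pv a x U * f x = 1 / n * ∑ i, ∑ x, Pv i a x U * f x := by
  simp only [asyncRule, mul_assoc, sum_mul, ← mul_sum]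
  rw [sum_comm]

lemma asyncRule_bestResponse_nonneg (a b : Profile n) (U : UtilProfile n) :
    0 ≤ asyncRule bestResponse a b U :=
  mul_nonneg (by positivity) (sum_nonneg fun i _ => bestResponse_nonneg i a b U)

lemma asyncRule_bestResponse_self_of_isStrictNash (hn : n ≠ 0) {U : UtilProfile n}
    {a : Profile n} (hU : IsStrictNash U a) : asyncRule bestResponse a a U = 1 := by
  simp [asyncRule, bestResponse_self_of_isStrictNash hU, hn]

-- Couple `x₁ ↦ y₁` with weight `p`, `x₀ ↦ y₁` with weight `q - p` and `x₀ ↦ y₀` with weight `1 - q`.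
lemma mix_le_mix {p q x₀ x₁ y₀ y₁ : ℝ} (hp : 0 ≤ p) (hpq : p ≤ q) (hq : q ≤ 1)
    (h₀ : x₀ ≤ y₀) (h₁ : x₁ ≤ y₁) (h₀₁ : x₀ ≤ y₁) :
    p * x₁ + (1 - p) * x₀ ≤ q * y₁ + (1 - q) * y₀ := by
  nlinarith [mul_le_mul_of_nonneg_left h₁ hp, mul_le_mul_of_nonneg_left h₀₁ (sub_nonneg.2 hpq),
    mul_le_mul_of_nonneg_left h₀ (sub_nonneg.2 hq)]

lemma Aligned.payoffGain_le {Uh : Hist n → UtilProfile n} {Uhat : UtilProfile n} (hal : Aligned Uh Uhat)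
    (h : Hist n) {a : Profile n} {i : Fin n} (ha : ∀ j, j ≠ i → a j ≤ lastProf h j) :
    payoffGain Uhat i a ≤ payoffGain (Uh h) i (lastProf h) := by
  obtain ⟨htrue, hfalse⟩ := hal h a i ha
  exact sub_le_sub htrue hfalse

lemma sum_asyncRule_bestResponse_mul_le {Uh : Hist n → UtilProfile n} {Uhat : UtilProfile n}
    (hal : Aligned Uh Uhat) (h : Hist n) {b : Profile n} (hb : b ≤ lastProf h)
    {f g : Profile n → ℝ} (hfg : ∀ x y, x ≤ y → f x ≤ g y) :
    ∑ x, asyncRule bestResponse b x Uhat * f x ≤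
      ∑ y, asyncRule bestResponse (lastProf h) y (Uh h) * g y := by
  simp only [sum_asyncRule_mul, sum_bestResponse_mul]
  refine mul_le_mul_of_nonneg_left (sum_le_sum fun i _ => ?_) (by positivity)
  have hupd : ∀ x y : Bool, x ≤ y →
      f (Function.update b i x) ≤ g (Function.update (lastProf h) i y) := fun x y hxy =>
    hfg _ _ (update_le_update_iff.2 ⟨hxy, fun j _ => hb j⟩)
  exact mix_le_mix (brProbTrue_nonneg _) (brProbTrue_mono (hal.payoffGain_le h fun j _ => hb j))
    (brProbTrue_le_one _) (hupd _ _ le_rfl) (hupd _ _ le_rfl) (hupd _ _ (Bool.false_le _))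

end Asynchronous

section Dominance

variable {n : ℕ}

lemma pathHist_nonneg {P : Rule n} (hP : ∀ x y U, 0 ≤ P x y U) (Uh : Hist n → UtilProfile n)
    {π : Profile n → ℝ} (hπ : ∀ x, 0 ≤ π x) (T : ℕ) (α : Fin (T + 1) → Profile n) :
    0 ≤ pathHist P Uh π T α :=
  mul_nonneg (hπ _) (prod_nonneg fun _ _ => hP ..)

theorem prAt_pathHist_eq_sum_reachProb (P : Rule n) (Uh : Hist n → UtilProfile n)
    (π : Profile n → ℝ) (target : Profile n) (T : ℕ) :
    prAt T (pathHist P Uh π T) target =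
      ∑ α : Fin 1 → Profile n, π (α 0) * reachProb P Uh target T ⟨0, α⟩ := by
  simpa [pathHist] using (sum_pathHist_mul_reachProb P Uh π target T 0).symm

theorem prAt_pathStatic_le_prAt_pathHist {Uh : Hist n → UtilProfile n} {Uhat : UtilProfile n}
    (hal : Aligned Uh Uhat) {π : Profile n → ℝ} (hπ : ∀ x, 0 ≤ π x) (T : ℕ) :
    prAt T (pathStatic (asyncRule bestResponse) Uhat π T) ⊤ ≤
      prAt T (pathHist (asyncRule bestResponse) Uh π T) ⊤ := by
  have hreach := reachProb_top_le_reachProb_top (asyncRule bestResponse) (fun _ => Uhat) Uh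
    fun h' h hle _ _ hfg => sum_asyncRule_bestResponse_mul_le hal h hle hfg
  change prAt T (pathHist _ (fun _ => Uhat) π T) ⊤ ≤ _
  rw [prAt_pathHist_eq_sum_reachProb, prAt_pathHist_eq_sum_reachProb]
  exact sum_le_sum fun α _ =>
    mul_le_mul_of_nonneg_left (hreach T ⟨0, α⟩ ⟨0, α⟩ le_rfl) (hπ _)

theorem prAt_pathHist_pos {P : Rule n} (hP : ∀ x y U, 0 ≤ P x y U) {Uh : Hist n → UtilProfile n}
    {π : Profile n → ℝ} (hπ : ∀ x, 0 ≤ π x) {a : Profile n} (ha : 0 < π a)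
    (hstay : ∀ h, P a a (Uh h) = 1) (T : ℕ) : 0 < prAt T (pathHist P Uh π T) a := by
  have hconst : pathHist P Uh π T (fun _ => a) = π a := by simp [pathHist, hstay]
  calc 0 < pathHist P Uh π T (fun _ => a) := hconst ▸ ha
    _ ≤ prAt T (pathHist P Uh π T) a :=
      single_le_sum (fun α _ => pathHist_nonneg hP Uh hπ T α) (by simp)

end Dominance

section CTI

variable {n : ℕ} (G : SimpleGraph (Fin n)) [DecidableRel G.Adj] (c : Fin n → ℝ)

lemma ctiUtil_update_false (w : Fin n → ℝ) (i : Fin n) (a : Profile n) :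
    ctiUtil G c w i (Function.update a i false) = 0 := by
  simp [ctiUtil]

lemma ctiUtil_update_true (w : Fin n → ℝ) (i : Fin n) (a : Profile n) :
    ctiUtil G c w i (Function.update a i true) =
      -c i + ∑ j ∈ G.neighborFinset i, if a j then w j else 0 := by
  simp only [ctiUtil, Function.update_self, if_true, one_mul]
  congr 1
  refine sum_congr rfl fun j hj => ?_
  rw [Function.update_of_ne ((G.mem_neighborFinset i j).mp hj).ne']

lemma aligned_ctiUtil {v : Fin n → Hist n → ℝ} (hv : ∀ j h, 0 ≤ v j h) {vlow : ℝ}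
    (hlow : ∀ j h, vlow ≤ v j h) :
    Aligned (fun h => ctiUtil G c fun j => v j h) (ctiUtil G c fun _ => vlow) := by
  intro h a i ha
  dsimp only
  refine ⟨?_, by rw [ctiUtil_update_false, ctiUtil_update_false]⟩
  rw [ctiUtil_update_true, ctiUtil_update_true]
  gcongr with j hj
  have haj := ha j ((G.mem_neighborFinset i j).mp hj).ne'
  cases hj₁ : a j <;> cases hj₂ : lastProf h j <;> simp_all [Bool.le_iff_imp]

lemma isStrictNash_ctiUtil_top (hdeg : ∀ i, 0 < (G.neighborFinset i).card) {vlow : ℝ}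
    (hval : ∀ i, c i / (G.neighborFinset i).card < vlow) {w : Fin n → ℝ}
    (hw : ∀ j, vlow ≤ w j) : IsStrictNash (ctiUtil G c w) ⊤ := by
  intro i b hb
  obtain rfl : b = false := by simpa using hb
  have hcard : (0 : ℝ) < (G.neighborFinset i).card := by exact_mod_cast hdeg i
  have hcost : c i < (G.neighborFinset i).card * vlow := by
    have := hval i
    rw [div_lt_iff₀ hcard] at this
    linarith
  have hsum : (G.neighborFinset i).card * vlow ≤ ∑ j ∈ G.neighborFinset i, w j := by
    simpa only [nsmul_eq_mul] using card_nsmul_le_sum _ _ _ fun j _ => hw j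
  rw [ctiUtil_update_false,
    show (⊤ : Profile n) = Function.update ⊤ i true from (Function.update_eq_self i _).symm,
    ctiUtil_update_true]
  simp only [Pi.top_apply, top_eq_true, if_true]
  linarith

end CTI

theorem cti_best_response_general (n : ℕ) (hn : 1 ≤ n) (G : SimpleGraph (Fin n)) [DecidableRel G.Adj]
    (c : Fin n → ℝ)
    (v : Fin n → Hist n → ℝ) (hv : ∀ j h, 0 ≤ v j h)
    (vlow : ℝ) (hlow : ∀ j h, vlow ≤ v j h)
    (hdeg : ∀ i, 0 < (G.neighborFinset i).card)
    (hval : ∀ i, c i / (G.neighborFinset i).card < vlow)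
    (π : Profile n → ℝ) (hfull : ∀ a, 0 < π a) :
    IsStrictNash (ctiUtil G c (fun _ => vlow)) (fun _ => true) ∧
    (∀ t : ℕ,
      prAt t (pathStatic (asyncRule fun i => bestResponse i)
          (ctiUtil G c (fun _ => vlow)) π t) (fun _ => true)
        ≤ prAt t (pathHist (asyncRule fun i => bestResponse i)
          (fun h => ctiUtil G c (fun j => v j h)) π t) (fun _ => true)) ∧
    (∀ t : ℕ,
      0 < prAt t (pathHist (asyncRule fun i => bestResponse i)
          (fun h => ctiUtil G c (fun j => v j h)) π t) (fun _ => true)) := by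
  have hπ : ∀ a, 0 ≤ π a := fun a => (hfull a).le
  have hnash : ∀ w : Fin n → ℝ, (∀ j, vlow ≤ w j) → IsStrictNash (ctiUtil G c w) ⊤ :=
    fun _ => isStrictNash_ctiUtil_top G c hdeg hval
  refine ⟨hnash _ fun _ => le_rfl, prAt_pathStatic_le_prAt_pathHist (aligned_ctiUtil G c hv hlow) hπ,
    prAt_pathHist_pos asyncRule_bestResponse_nonneg hπ (hfull ⊤) fun h => ?_⟩
  exact asyncRule_bestResponse_self_of_isStrictNash (by omega) (hnash _ (hlow · h))

/-- CTI sharing under best response dynamics: if every firm has a neighbor and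
`v̲ > c_i/|N_i|` for all `i`, then all-sharing is a strict Nash equilibrium of the
reference static game, the history-dependent probability of all-sharing dominates the
static one at every time, and is positive at every time for full-support `π`. -/
theorem cti_best_response (n : ℕ) (hn : 1 ≤ n) (G : SimpleGraph (Fin n)) [DecidableRel G.Adj]
    (c : Fin n → ℝ) (hc : ∀ i, 0 ≤ c i)
    (v : Fin n → Hist n → ℝ) (hv : ∀ j h, 0 ≤ v j h)
    (vlow : ℝ) (hlow : ∀ j h, vlow ≤ v j h)
    (hdeg : ∀ i, 0 < (G.neighborFinset i).card)
    (hval : ∀ i, c i / (G.neighborFinset i).card < vlow)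
    (π : Profile n → ℝ) (hπ : IsProb π) (hfull : ∀ a, 0 < π a) :
    IsStrictNash (ctiUtil G c (fun _ => vlow)) (fun _ => true) ∧
    (∀ t : ℕ,
      prAt t (pathStatic (asyncRule fun i => bestResponse i)
          (ctiUtil G c (fun _ => vlow)) π t) (fun _ => true)
        ≤ prAt t (pathHist (asyncRule fun i => bestResponse i)
          (fun h => ctiUtil G c (fun j => v j h)) π t) (fun _ => true)) ∧
    (∀ t : ℕ,
      0 < prAt t (pathHist (asyncRule fun i => bestResponse i)
          (fun h => ctiUtil G c (fun j => v j h)) π t) (fun _ => true)) :=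
  cti_best_response_general n hn G c v hv vlow hlow hdeg hval π hfull
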